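/- arXiv:1911.10705 — 2 statements merged into one kernel-verified Lean document; each statement's English description precedes it below -/
import Mathlib

section
/- (LEMMA EVEN) For every n ≥ 1 and every k with 0 ≤ k ≤ L_{2n−1}, one has T(L_{2n} + k) = T(k). -/
/-- The golden mean φ = (1+√5)/2. -/
noncomputable def phi : ℝ := (1 + Real.sqrt 5) / 2

/-- `d : ℤ → ℕ` is a base-phi expansion of `N`: finitely supported, digits at most 1,
no two consecutive digits equal 1, and `∑ d i * φ^i = N`. -/
def IsBasePhi (N : ℕ) (d : ℤ → ℕ) : Prop :=
  {i : ℤ | d i ≠ 0}.Finite ∧ (∀ i, d i ≤ 1) ∧ (∀ i, d i * d (i + 1) = 0) ∧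
    ∑' i : ℤ, (d i : ℝ) * phi ^ i = (N : ℝ)

/-- The Lucas numbers: L 0 = 2, L 1 = 1, L (n+2) = L (n+1) + L n. -/
def Lucas : ℕ → ℕ
  | 0 => 2
  | 1 => 1
  | n + 2 => Lucas (n + 1) + Lucas n

/-- The sum of the digits of a (finitely supported) digit function. -/
noncomputable def digitSum (d : ℤ → ℕ) : ℕ := ∑' i : ℤ, d i

lemma phi_pos : 0 < phi := by
  unfold phi; have := Real.sqrt_nonneg 5; linarith

lemma phi_ne : phi ≠ 0 := ne_of_gt phi_pos

lemma phi_sq : phi ^ 2 = phi + 1 := by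
  unfold phi
  have h : Real.sqrt 5 ^ 2 = 5 := Real.sq_sqrt (by norm_num)
  nlinarith [h]

lemma phi_rec (i : ℤ) : phi ^ (i + 2) = phi ^ (i + 1) + phi ^ i := by
  have h2 : phi ^ (i+2) = phi ^ i * phi ^ (2:ℕ) := by
    rw [← zpow_natCast phi 2, ← zpow_add₀ phi_ne]; norm_num
  have h1 : phi ^ (i+1) = phi ^ i * phi ^ (1:ℕ) := by
    rw [← zpow_natCast phi 1, ← zpow_add₀ phi_ne]; norm_num
  rw [h2, h1, phi_sq]; ring

/-- `φ^{-m} = φ^{-(m+1)} + φ^{-(m+2)}`. -/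
lemma phi_neg_rec (m : ℤ) : phi ^ (-m) = phi ^ (-(m+1)) + phi ^ (-(m+2)) := by
  have h := phi_rec (-m-2)
  rw [show -m-2+2 = -m by ring, show -m-2+1 = -(m+1) by ring, show -m-2 = -(m+2) by ring] at h
  exact h

lemma lucas_even_odd : ∀ m : ℕ,
    (Lucas (2*m) : ℝ) = phi ^ (2*(m:ℤ)) + phi ^ (-(2*(m:ℤ))) ∧
    (Lucas (2*m+1) : ℝ) = phi ^ (2*(m:ℤ)+1) - phi ^ (-(2*(m:ℤ)+1)) := by
  intro m
  induction m with
  | zero =>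
    constructor
    · show ((2:ℕ):ℝ) = phi ^ (2*(0:ℤ)) + phi ^ (-(2*(0:ℤ)))
      norm_num
    · show ((1:ℕ):ℝ) = phi ^ (2*(0:ℤ)+1) - phi ^ (-(2*(0:ℤ)+1))
      have h := phi_rec (-1)
      norm_num at h ⊢
      linarith
  | succ p ih =>
    obtain ⟨he, ho⟩ := ih
    have hL2 : Lucas (2*(p+1)) = Lucas (2*p+1) + Lucas (2*p) := by
      rw [show 2*(p+1) = (2*p)+2 by ring]; rfl
    have hL3 : Lucas (2*(p+1)+1) = Lucas (2*(p+1)) + Lucas (2*p+1) := by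
      rw [show 2*(p+1)+1 = (2*p+1)+2 by ring, show 2*(p+1) = (2*p)+2 by ring]; rfl
    have r1 := phi_rec (2*(p:ℤ))
    have r2 := phi_rec (-(2*(p:ℤ))-2)
    rw [show -(2*(p:ℤ))-2+2 = -(2*(p:ℤ)) by ring, show -(2*(p:ℤ))-2+1 = -(2*(p:ℤ)+1) by ring,
      show -(2*(p:ℤ))-2 = -(2*(p:ℤ)+2) by ring] at r2
    have r3 := phi_rec (2*(p:ℤ)+1)
    rw [show 2*(p:ℤ)+1+2 = 2*(p:ℤ)+3 by ring, show 2*(p:ℤ)+1+1 = 2*(p:ℤ)+2 by ring] at r3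
    have r4 := phi_rec (-(2*(p:ℤ))-3)
    rw [show -(2*(p:ℤ))-3+2 = -(2*(p:ℤ)+1) by ring, show -(2*(p:ℤ))-3+1 = -(2*(p:ℤ)+2) by ring,
      show -(2*(p:ℤ))-3 = -(2*(p:ℤ)+3) by ring] at r4
    have he2 : (Lucas (2*(p+1)) : ℝ) = phi ^ (2*((p:ℤ)+1)) + phi ^ (-(2*((p:ℤ)+1))) := by
      rw [hL2]
      push_cast
      rw [he, ho, show (2*((p:ℤ)+1)) = 2*(p:ℤ)+2 by ring, r1]
      linarith
    constructor
    · push_cast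
      push_cast at he2
      exact he2
    · rw [hL3]
      push_cast
      push_cast at he2
      rw [he2, ho, show (2*((p:ℤ)+1)+1) = 2*(p:ℤ)+3 by ring,
        show (2*((p:ℤ)+1)) = 2*(p:ℤ)+2 by ring, r3]
      linarith

lemma lucas_even (m : ℕ) : (Lucas (2*m) : ℝ) = phi ^ (2*(m:ℤ)) + phi ^ (-(2*(m:ℤ))) :=
  (lucas_even_odd m).1

lemma lucas_odd (m : ℕ) : (Lucas (2*m+1) : ℝ) = phi ^ (2*(m:ℤ)+1) - phi ^ (-(2*(m:ℤ)+1)) :=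
  (lucas_even_odd m).2

/-- `S` represents the real `x` in base phi with digits in `[a,b]`, no two consecutive. -/
def PhiRep (x : ℝ) (a b : ℤ) (S : Finset ℤ) : Prop :=
  (∀ i ∈ S, i + 1 ∉ S) ∧ (∀ i ∈ S, a ≤ i ∧ i ≤ b) ∧ (∑ i ∈ S, phi ^ i) = x

lemma rep_empty (a b : ℤ) : PhiRep 0 a b ∅ := ⟨by simp, by simp, by simp⟩

lemma rep_congr {x y : ℝ} {a b : ℤ} {S : Finset ℤ} (h : PhiRep x a b S) (hxy : x = y) :
    PhiRep y a b S := hxy ▸ h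

lemma rep_mono {x : ℝ} {a b : ℤ} {S : Finset ℤ} (h : PhiRep x a b S) {a' b' : ℤ}
    (ha : a' ≤ a) (hb : b ≤ b') : PhiRep x a' b' S :=
  ⟨h.1, fun i hi => ⟨le_trans ha (h.2.1 i hi).1, le_trans (h.2.1 i hi).2 hb⟩, h.2.2⟩

lemma rep_insert {x : ℝ} {a b : ℤ} {S : Finset ℤ} (h : PhiRep x a b S) {j a' b' : ℤ}
    (hj : j + 2 ≤ a ∨ b + 2 ≤ j) (ha1 : a' ≤ a) (ha2 : a' ≤ j) (hb1 : b ≤ b') (hb2 : j ≤ b') :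
    PhiRep (x + phi ^ j) a' b' (insert j S) := by
  obtain ⟨hcons, hbound, hsum⟩ := h
  have hjS : j ∉ S := by
    intro hjmem
    rcases hj with h1 | h2
    · linarith [(hbound j hjmem).1]
    · linarith [(hbound j hjmem).2]
  refine ⟨?_, ?_, ?_⟩
  · intro i hi
    rcases Finset.mem_insert.mp hi with rfl | hiS
    · intro hc
      rcases Finset.mem_insert.mp hc with h1 | h1
      · omega
      · rcases hj with h2 | h2
        · linarith [(hbound _ h1).1]
        · linarith [(hbound _ h1).2]
    · intro hc
      rcases Finset.mem_insert.mp hc with h1 | h1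
      · rcases hj with h2 | h2
        · linarith [(hbound i hiS).1, (hbound i hiS).2]
        · linarith [(hbound i hiS).2]
      · exact hcons i hiS h1
  · intro i hi
    rcases Finset.mem_insert.mp hi with rfl | hiS
    · exact ⟨ha2, hb2⟩
    · exact ⟨le_trans ha1 (hbound i hiS).1, le_trans (hbound i hiS).2 hb1⟩
  · rw [Finset.sum_insert hjS, hsum]; ring

/-- Existence statement A: every `k ≤ L(2n+1)` has a representation with digits in `[-2n, 2n]`. -/
def Aprop (n : ℕ) : Prop :=
  ∀ k : ℕ, k ≤ Lucas (2*n+1) → ∃ S, PhiRep (k:ℝ) (-(2*(n:ℤ))) (2*(n:ℤ)) S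

/-- Existence statement B: for `k + 2 ≤ L(2n)`, the real `k + 1 - φ^{-2n}` has a representation
with digits in `[1-2n, 2n-1]`. -/
def Bprop (n : ℕ) : Prop :=
  ∀ k : ℕ, k + 2 ≤ Lucas (2*n) →
    ∃ S, PhiRep ((k:ℝ) + 1 - phi ^ (-(2*(n:ℤ)))) (1-2*(n:ℤ)) (2*(n:ℤ)-1) S

lemma main_induction : ∀ n : ℕ, Aprop n ∧ Bprop n := by
  intro n
  induction n using Nat.strong_induction_on with
  | _ n ih =>
    match n with
    | 0 =>
      constructor
      · intro k hk
        have hk1 : k ≤ 1 := by simpa [Lucas] using hk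
        interval_cases k
        · exact ⟨∅, rep_congr (rep_empty _ _) (by norm_num)⟩
        · refine ⟨insert 0 ∅, rep_congr
            (rep_insert (rep_empty 2 (-(2*((0:ℕ):ℤ)))) (Or.inl (by norm_num))
              (by norm_num) (by norm_num) (by norm_num) (by norm_num)) ?_⟩
          norm_num
      · intro k hk
        have hk0 : k = 0 := by simp [Lucas] at hk; omega
        subst hk0
        exact ⟨∅, rep_congr (rep_empty _ _) (by norm_num)⟩
    | (m+1) =>
      have ihm := ih m (by omega)
      have hL2 : Lucas (2*m+2) = Lucas (2*m+1) + Lucas (2*m) := rfl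
      have hL3 : Lucas (2*m+3) = Lucas (2*m+2) + Lucas (2*m+1) := rfl
      have r2 := phi_neg_rec (2*(m:ℤ))
      rw [show (2*(m:ℤ)+1) = 2*(m:ℤ)+1 by ring, show (2*(m:ℤ)+2) = 2*(m:ℤ)+2 by ring] at r2
      have hle : (Lucas (2*(m+1)) : ℝ) = phi ^ (2*(m:ℤ)+2) + phi ^ (-(2*(m:ℤ)+2)) := by
        have := lucas_even (m+1)
        push_cast at this ⊢
        rw [show (2*((m:ℤ)+1)) = 2*(m:ℤ)+2 by ring] at this
        exact this
      have hlo : (Lucas (2*m+1) : ℝ) = phi ^ (2*(m:ℤ)+1) - phi ^ (-(2*(m:ℤ)+1)) := lucas_odd m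
      constructor
      · -- Aprop (m+1)
        intro k hk
        rw [show 2*(m+1)+1 = 2*m+3 by ring] at hk
        by_cases h1 : k ≤ Lucas (2*m+1)
        · obtain ⟨S, hS⟩ := ihm.1 k h1
          exact ⟨S, rep_mono hS (by push_cast; omega) (by push_cast; omega)⟩
        by_cases h2 : k + 1 ≤ Lucas (2*m+2)
        · -- odd interval: L(2m+1) < k < L(2m+2)
          obtain ⟨t, ht⟩ : ∃ t, k = Lucas (2*m+1) + 1 + t := ⟨k - Lucas (2*m+1) - 1, by omega⟩
          have htb : t + 2 ≤ Lucas (2*m) := by omega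
          obtain ⟨S, hS⟩ := ihm.2 t htb
          have h3 := rep_insert hS (j := 2*(m:ℤ)+1) (a' := 1-2*(m:ℤ)) (b' := 2*((m+1:ℕ):ℤ))
            (Or.inr (by omega)) (le_refl _) (by push_cast; omega) (by push_cast; omega)
            (by push_cast; omega)
          have h4 := rep_insert h3 (j := -(2*(m:ℤ)+2)) (a' := -(2*((m+1:ℕ):ℤ)))
            (b' := 2*((m+1:ℕ):ℤ))
            (Or.inl (by omega)) (by push_cast; omega) (by push_cast; omega) (le_refl _)
            (by push_cast; omega)
          refine ⟨_, rep_congr h4 ?_⟩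
          rw [ht]
          push_cast
          rw [hlo] at *
          linarith [hlo, r2]
        · -- even interval: L(2m+2) ≤ k ≤ L(2m+3)
          obtain ⟨t, ht⟩ : ∃ t, k = Lucas (2*m+2) + t := ⟨k - Lucas (2*m+2), by omega⟩
          have htb : t ≤ Lucas (2*m+1) := by omega
          obtain ⟨S, hS⟩ := ihm.1 t htb
          have h3 := rep_insert hS (j := 2*(m:ℤ)+2) (a' := -(2*(m:ℤ))) (b' := 2*((m+1:ℕ):ℤ))
            (Or.inr (by omega)) (le_refl _) (by push_cast; omega) (by push_cast; omega)
            (by push_cast; omega)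
          have h4 := rep_insert h3 (j := -(2*(m:ℤ)+2)) (a' := -(2*((m+1:ℕ):ℤ)))
            (b' := 2*((m+1:ℕ):ℤ))
            (Or.inl (by omega)) (by push_cast; omega) (by push_cast; omega) (le_refl _)
            (by push_cast; omega)
          refine ⟨_, rep_congr h4 ?_⟩
          rw [ht, show 2*m+2 = 2*(m+1) by ring]
          push_cast [hle]
          linarith
      · -- Bprop (m+1)
        intro k hk
        rw [show 2*(m+1) = 2*m+2 by ring] at hk
        have hxgoal : phi ^ (-(2*((m+1:ℕ):ℤ))) = phi ^ (-(2*(m:ℤ)+2)) := by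
          push_cast
          rw [show (2*((m:ℤ)+1)) = 2*(m:ℤ)+2 by ring]
        by_cases h1 : k + 2 ≤ Lucas (2*m)
        · obtain ⟨S, hS⟩ := ihm.2 k h1
          have h3 := rep_insert hS (j := -(2*(m:ℤ)+1)) (a' := 1-2*((m+1:ℕ):ℤ))
            (b' := 2*((m+1:ℕ):ℤ)-1)
            (Or.inl (by omega)) (by push_cast; omega) (by push_cast; omega)
            (by push_cast; omega) (by push_cast; omega)
          refine ⟨_, rep_congr h3 ?_⟩
          rw [hxgoal]
          linarith [r2]
        by_cases h2 : k + 1 ≤ Lucas (2*m+1)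
        · -- middle interval, uses A at level m-1
          match m with
          | 0 => simp [Lucas] at h1 h2; omega
          | (p+1) =>
            have hLp : Lucas (2*p+3) = Lucas (2*p+2) + Lucas (2*p+1) := rfl
            obtain ⟨t, ht⟩ : ∃ t, k + 1 = Lucas (2*(p+1)) + t :=
              ⟨k + 1 - Lucas (2*(p+1)), by omega⟩
            have htb : t ≤ Lucas (2*p+1) := by
              rw [show 2*(p+1) = 2*p+2 by ring] at ht
              rw [show 2*(p+1)+1 = 2*p+3 by ring] at h2
              omega
            obtain ⟨S, hS⟩ := (ih p (by omega)).1 t htb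
            have h3 := rep_insert hS (j := 2*((p:ℤ)+1)) (a' := -(2*(p:ℤ)))
              (b' := 2*(((p+1)+1:ℕ):ℤ)-1)
              (Or.inr (by omega)) (le_refl _) (by push_cast; omega) (by push_cast; omega)
              (by push_cast; omega)
            have h4 := rep_insert h3 (j := -(2*((p:ℤ)+1)+1)) (a' := 1-2*(((p+1)+1:ℕ):ℤ))
              (b' := 2*(((p+1)+1:ℕ):ℤ)-1)
              (Or.inl (by omega)) (by push_cast; omega) (by push_cast; omega) (le_refl _)
              (by push_cast; omega)
            refine ⟨_, rep_congr h4 ?_⟩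
            have hkr : (k:ℝ) + 1 = (Lucas (2*(p+1)) : ℝ) + t := by exact_mod_cast ht
            have hle' : (Lucas (2*(p+1)) : ℝ) = phi ^ (2*((p:ℤ)+1)) + phi ^ (-(2*((p:ℤ)+1))) := by
              have := lucas_even (p+1); push_cast at this ⊢; exact this
            have r2' := phi_neg_rec (2*((p:ℤ)+1))
            have hxg : phi ^ (-(2*(((p+1)+1:ℕ)):ℤ)) = phi ^ (-(2*((p:ℤ)+1)+2)) := by
              push_cast; ring_nf
            rw [show (-(2*((((p+1)+1:ℕ)):ℤ))) = -(2*((p:ℤ)+1)+2) by push_cast; ring]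
            linarith [hle', r2', hkr]
        · -- top interval: L(2m+1) ≤ k
          obtain ⟨t, ht⟩ : ∃ t, k = Lucas (2*m+1) + t := ⟨k - Lucas (2*m+1), by omega⟩
          have htb : t + 2 ≤ Lucas (2*m) := by omega
          obtain ⟨S, hS⟩ := ihm.2 t htb
          have h3 := rep_insert hS (j := 2*(m:ℤ)+1) (a' := 1-2*((m+1:ℕ):ℤ))
            (b' := 2*((m+1:ℕ):ℤ)-1)
            (Or.inr (by omega)) (by push_cast; omega) (by push_cast; omega)
            (by push_cast; omega) (by push_cast; omega)
          refine ⟨_, rep_congr h3 ?_⟩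
          rw [hxgoal, ht]
          push_cast [hlo]
          linarith [r2]

lemma rep_isBasePhi {N : ℕ} {a b : ℤ} {S : Finset ℤ} (h : PhiRep (N:ℝ) a b S) :
    IsBasePhi N (fun i => if i ∈ S then 1 else 0) ∧
      digitSum (fun i => if i ∈ S then 1 else 0) = S.card := by
  obtain ⟨hcons, _, hsum⟩ := h
  constructor
  · refine ⟨?_, ?_, ?_, ?_⟩
    · apply Set.Finite.subset S.finite_toSet
      intro i hi
      simp only [Set.mem_setOf_eq] at hi
      rw [Finset.mem_coe]
      by_contra hc
      simp [hc] at hi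
    · intro i
      by_cases hc : i ∈ S <;> simp [hc]
    · intro i
      by_cases hc : i ∈ S
      · simp [hc, hcons i hc]
      · simp [hc]
    · have hz : ∀ i ∉ S, ((if i ∈ S then (1:ℕ) else 0) : ℝ) * phi ^ i = 0 := by
        intro i hi; simp [hi]
      have hz' : ∀ i ∉ S, (Nat.cast (if i ∈ S then (1:ℕ) else 0) : ℝ) * phi ^ i = 0 := by
        intro i hi; simp [hi]
      beta_reduce
      rw [tsum_eq_sum hz', ← hsum]
      apply Finset.sum_congr rfl
      intro i hi
      simp [hi]
  · unfold digitSum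
    have hz : ∀ i ∉ S, (if i ∈ S then (1:ℕ) else 0) = 0 := fun i hi => by simp [hi]
    rw [tsum_eq_sum hz]
    simp

/-- LEMMA EVEN: for `n ≥ 1` and `0 ≤ k ≤ L (2n-1)`, `T (L (2n) + k) = T k`, where `T` is the
sum-of-digits function modulo 2 of the base-phi expansion. -/
theorem lemma_even (T : ℕ → ℕ)
    (hT : ∀ (N : ℕ) (d : ℤ → ℕ), IsBasePhi N d → T N = digitSum d % 2)
    (n : ℕ) (hn : 1 ≤ n) (k : ℕ) (hk : k ≤ Lucas (2 * n - 1)) :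
    T (Lucas (2 * n) + k) = T k := by
  obtain ⟨p, rfl⟩ : ∃ p, n = p + 1 := ⟨n - 1, by omega⟩
  have hk' : k ≤ Lucas (2*p+1) := by
    rwa [show 2*(p+1)-1 = 2*p+1 by omega] at hk
  obtain ⟨S, hS⟩ := (main_induction p).1 k hk'
  have h3 := rep_insert hS (j := 2*(p:ℤ)+2) (a' := -(2*(p:ℤ))) (b' := 2*(p:ℤ)+2)
    (Or.inr (by omega)) (le_refl _) (by omega) (by omega) (le_refl _)
  have h4 := rep_insert h3 (j := -(2*(p:ℤ)+2)) (a' := -(2*(p:ℤ)+2)) (b' := 2*(p:ℤ)+2)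
    (Or.inl (by omega)) (by omega) (le_refl _) (le_refl _) (by omega)
  have hle : (Lucas (2*(p+1)) : ℝ) = phi ^ (2*(p:ℤ)+2) + phi ^ (-(2*(p:ℤ)+2)) := by
    have := lucas_even (p+1)
    push_cast at this ⊢
    rw [show (2*((p:ℤ)+1)) = 2*(p:ℤ)+2 by ring] at this
    exact this
  have h5 : PhiRep ((Lucas (2*(p+1)) + k : ℕ) : ℝ) (-(2*(p:ℤ)+2)) (2*(p:ℤ)+2)
      (insert (-(2*(p:ℤ)+2)) (insert (2*(p:ℤ)+2) S)) := by
    refine rep_congr h4 ?_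
    push_cast [hle]
    ring
  obtain ⟨hB1, hD1⟩ := rep_isBasePhi h5
  obtain ⟨hB2, hD2⟩ := rep_isBasePhi hS
  rw [hT _ _ hB1, hT _ _ hB2, hD1, hD2]
  have hmem1 : (2*(p:ℤ)+2) ∉ S := by
    intro hc
    have := (hS.2.1 _ hc).2
    omega
  have hmem2 : -(2*(p:ℤ)+2) ∉ insert (2*(p:ℤ)+2) S := by
    simp only [Finset.mem_insert]
    push_neg
    refine ⟨by omega, ?_⟩
    intro hc
    have := (hS.2.1 _ hc).1
    omega
  rw [Finset.card_insert_of_notMem hmem2, Finset.card_insert_of_notMem hmem1]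
  omega
end

section
/- The set of two-letter factors of the fixed point of τ starting with 1 is exactly {12, 23, 24, 28, 31, 35, 47, 56, 64, 67, 68, 71, 75, 83}: for every n ≥ 0, every length-2 factor (pair of adjacent letters) of the word τ^n(1) belongs to this set, and conversely every word in this set occurs as a length-2 factor of τ^n(1) for some n. -/
/-- The morphism τ on the alphabet {1,…,8}. -/
def tau : ℕ → List ℕ
  | 1 => [1, 2]
  | 2 => [3, 1, 2]
  | 3 => [4, 7]
  | 4 => [8, 3, 1, 2]
  | 5 => [5, 6]
  | 6 => [7, 5, 6]
  | 7 => [8, 3]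
  | 8 => [4, 7, 5, 6]
  | _ => []

/-- τ applied to a word, letter by letter. -/
def tauWord (w : List ℕ) : List ℕ := w.flatMap tau

/-- The letter-to-letter map λ with λ(1)=λ(3)=λ(6)=λ(8)=0 and λ(2)=λ(4)=λ(5)=λ(7)=1. -/
def lam : ℕ → ℕ
  | 2 => 1
  | 4 => 1
  | 5 => 1
  | 7 => 1
  | _ => 0

def Slist : List (List ℕ) :=
  [[1, 2], [2, 3], [2, 4], [2, 8], [3, 1], [3, 5], [4, 7], [5, 6], [6, 4], [6, 7],
   [6, 8], [7, 1], [7, 5], [8, 3]]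

def good (a b : ℕ) : Prop := [a, b] ∈ Slist

instance (a b : ℕ) : Decidable (good a b) := inferInstanceAs (Decidable ([a, b] ∈ Slist))

def inv (w : List ℕ) : Prop := (∀ a ∈ w, 1 ≤ a ∧ a ≤ 8) ∧ w.Chain' good

lemma step {w : List ℕ} (h : inv w) : inv (tauWord w) := by
  obtain ⟨hmem, hch⟩ := h
  constructor
  · intro a ha
    rw [tauWord, List.mem_flatMap] at ha
    obtain ⟨b, hb, hab⟩ := ha
    obtain ⟨h1, h2⟩ := hmem b hb
    interval_cases b <;> simp [tau] at hab <;> omega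
  · have : tauWord w = (w.map tau).flatten := by
      simp [tauWord, List.flatMap]
    unfold List.Chain' at hch ⊢
    rw [this, List.isChain_flatten]
    · constructor
      · intro l hl
        rw [List.mem_map] at hl
        obtain ⟨b, hb, rfl⟩ := hl
        obtain ⟨h1, h2⟩ := hmem b hb
        interval_cases b <;> simp [tau, List.isChain_cons_cons, List.isChain_singleton, good, Slist]
      · rw [List.isChain_map]
        refine hch.imp ?_
        intro a b hab
        simp only [good, Slist, List.mem_cons, List.not_mem_nil, or_false,
          List.cons.injEq, and_true] at hab
        rcases hab with ⟨rfl,rfl⟩|⟨rfl,rfl⟩|⟨rfl,rfl⟩|⟨rfl,rfl⟩|⟨rfl,rfl⟩|⟨rfl,rfl⟩|⟨rfl,rfl⟩|⟨rfl,rfl⟩|⟨rfl,rfl⟩|⟨rfl,rfl⟩|⟨rfl,rfl⟩|⟨rfl,rfl⟩|⟨rfl,rfl⟩|⟨rfl,rfl⟩ <;> decide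
    · intro hn
      rw [List.mem_map] at hn
      obtain ⟨b, hb, hb2⟩ := hn
      obtain ⟨h1, h2⟩ := hmem b hb
      interval_cases b <;> simp [tau] at hb2

lemma inv_iter (n : ℕ) : inv (tauWord^[n] [1]) := by
  induction n with
  | zero => exact ⟨by decide, List.isChain_singleton _⟩
  | succ n ih => rw [Function.iterate_succ_apply']; exact step ih

set_option maxRecDepth 100000 in
/-- The set of two-letter factors of the fixed point of τ starting with 1 is exactly
{12, 23, 24, 28, 31, 35, 47, 56, 64, 67, 68, 71, 75, 83}: every length-2 factor of any
`τ^n(1)` belongs to this set, and every word in this set is a factor of some `τ^n(1)`. -/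
theorem two_letter_factors :
    (∀ (n : ℕ) (p : List ℕ), p.length = 2 → p <:+: tauWord^[n] [1] →
      p ∈ [[1, 2], [2, 3], [2, 4], [2, 8], [3, 1], [3, 5], [4, 7], [5, 6], [6, 4], [6, 7],
            [6, 8], [7, 1], [7, 5], [8, 3]]) ∧
    (∀ p ∈ [[1, 2], [2, 3], [2, 4], [2, 8], [3, 1], [3, 5], [4, 7], [5, 6], [6, 4], [6, 7],
            [6, 8], [7, 1], [7, 5], [8, 3]],
      ∃ n : ℕ, p <:+: tauWord^[n] [1]) := by
  constructor
  · intro n p hlen hinf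
    match p, hlen with
    | [a, b], _ =>
      have := (inv_iter n).2.infix hinf
      exact (List.isChain_cons_cons.mp this).1
  · intro p hp
    fin_cases hp <;> exact ⟨6, by decide⟩
end
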